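/- Let A ∈ ℝ^{n×n} be symmetric positive semidefinite of rank k, and let 1 ≤ r ≤ k. Then there exists an index set J* ⊆ {1,…,n} with |J*| = r such that A(J*,J*) is invertible and ‖A − A_{J*}‖_* ≤ (r+1) · Σ_{s=r+1}^{n} σ_s(A). -/

import Mathlib

/-!
Write `e_k` for the sum of the `k × k` principal minors of `A`; it is the `k`-th elementary
symmetric function of the eigenvalues. When `det A(J,J) > 0`, the error `A - A_J` is the Schur
complement of `A(J,J)` in a positive semidefinite matrix, so its nuclear norm is its trace, and
the Schur determinant formula gives `det A(J,J) · tr (A - A_J) = ∑_{i ∉ J} det A(J ∪ {i}, J ∪ {i})`.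
Summed over all `|J| = r`, the right-hand side counts every `(r+1) × (r+1)` principal minor
`r + 1` times, so the `det A(J,J)`-weighted average of `tr (A - A_J)` is `(r+1) e_{r+1} / e_r`,
and some `J` does at least as well. Finally `e_{r+1} ≤ (σ_{r+1} + ⋯ + σ_n) e_r`: an
`(r+1)`-subset of the sorted eigenvalues is its largest index, which is beyond `r`, together
with an `r`-subset.
-/

open Matrix Finset

/-- Cross approximation `A_J = A(:,J) A(J,J)⁻¹ A(J,:)` built on the principal submatrix
indexed by the finite index set `J`. -/
noncomputable def crossApprox {n : ℕ} (A : Matrix (Fin n) (Fin n) ℝ) (J : Finset (Fin n)) :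
    Matrix (Fin n) (Fin n) ℝ :=
  A.submatrix id (Subtype.val : J → Fin n) *
    (A.submatrix (Subtype.val : J → Fin n) (Subtype.val : J → Fin n))⁻¹ *
    A.submatrix (Subtype.val : J → Fin n) id

/-- Determinant of the principal submatrix `A(J,J)`. -/
noncomputable def pminor {n : ℕ} (A : Matrix (Fin n) (Fin n) ℝ) (J : Finset (Fin n)) : ℝ :=
  (A.submatrix (Subtype.val : J → Fin n) (Subtype.val : J → Fin n)).det

/-- Nuclear norm: sum of the singular values of `M`, i.e. of the square roots of the
eigenvalues of `Mᴴ M`. -/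
noncomputable def nuclearNorm {n : ℕ} (M : Matrix (Fin n) (Fin n) ℝ) : ℝ :=
  ∑ i, Real.sqrt ((Matrix.isHermitian_conjTranspose_mul_self M).eigenvalues i)

/-- Frobenius norm. -/
noncomputable def frobNorm {n : ℕ} (M : Matrix (Fin n) (Fin n) ℝ) : ℝ :=
  Real.sqrt (∑ i, ∑ j, (M i j) ^ 2)

/-- Spectral norm: the largest singular value. -/
noncomputable def specNorm {n : ℕ} (M : Matrix (Fin n) (Fin n) ℝ) : ℝ :=
  ⨆ i, Real.sqrt ((Matrix.isHermitian_conjTranspose_mul_self M).eigenvalues i)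

/-- Max norm: largest magnitude of an entry. -/
noncomputable def maxNorm {n : ℕ} (M : Matrix (Fin n) (Fin n) ℝ) : ℝ :=
  ⨆ i, ⨆ j, |M i j|

/-- The tuple `f` sorted in nonincreasing order. -/
noncomputable def sortedDesc {m : ℕ} (f : Fin m → ℝ) : Fin m → ℝ :=
  fun i => -(((fun j => -f j) ∘ Tuple.sort fun j => -f j) i)

/-- `Esum M k` is the sum of all `k × k` principal minors of `M`. -/
noncomputable def Esum {n : ℕ} (M : Matrix (Fin n) (Fin n) ℝ) (k : ℕ) : ℝ :=
  ∑ K ∈ Finset.powersetCard k (Finset.univ : Finset (Fin n)), pminor M K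

section Spectrum

open Polynomial

theorem Polynomial.prod_X_sub_C_eq_multiset_prod {ι R : Type*} [CommRing R] (s : Finset ι)
    (g : ι → R) : ∏ i ∈ s, (X - C (g i)) = ((s.val.map g).map fun a => X - C a).prod := by
  rw [Multiset.map_map]
  rfl

theorem Matrix.IsHermitian.charpoly_eq_multiset_prod {n : ℕ} {A : Matrix (Fin n) (Fin n) ℝ}
    (hA : A.IsHermitian) :
    A.charpoly = ((univ.val.map hA.eigenvalues).map fun a => X - C a).prod := by
  rw [hA.charpoly_eq, ← prod_X_sub_C_eq_multiset_prod]
  rfl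

theorem esum_eq_esymm_eigenvalues {n : ℕ} {A : Matrix (Fin n) (Fin n) ℝ} (hA : A.IsHermitian)
    (k : ℕ) : Esum A k = (univ.val.map hA.eigenvalues).esymm k := by
  rcases le_or_gt k n with hk | hk
  · have hminors := A.charpoly_coeff_eq_sum_minors k (by simpa using hk)
    rw [hA.charpoly_eq_multiset_prod, Multiset.prod_X_sub_C_coeff _ (by simp)] at hminors
    simp only [Multiset.card_map, card_val, card_univ, Fintype.card_fin,
      Nat.sub_sub_self hk] at hminors
    simpa [Esum, pminor] using hminors.symm
  · simp [Esum, Multiset.esymm, powersetCard_eq_empty.mpr, Multiset.powersetCard_eq_empty, hk]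

theorem nuclearNorm_eq_sum_abs_eigenvalues {n : ℕ} {A : Matrix (Fin n) (Fin n) ℝ}
    (hA : A.IsHermitian) : nuclearNorm A = ∑ i, |hA.eigenvalues i| := by
  have hAA := isHermitian_conjTranspose_mul_self A
  have hcharpoly : (Aᴴ * A).charpoly = ∏ i, (X - C (hA.eigenvalues i ^ 2)) := by
    rw [hA.eq, ← sq, ← cfc_pow_id (R := ℝ) A 2 hA.isSelfAdjoint]
    exact hA.charpoly_cfc_eq _
  have hroots : univ.val.map hAA.eigenvalues = univ.val.map (hA.eigenvalues · ^ 2) := by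
    have := congrArg roots (hAA.charpoly_eq_multiset_prod.symm.trans hcharpoly)
    rwa [prod_X_sub_C_eq_multiset_prod, roots_multiset_prod_X_sub_C,
      roots_multiset_prod_X_sub_C] at this
  have hsum (f : Fin n → ℝ) : ∑ i, √(f i) = ((univ.val.map f).map Real.sqrt).sum := by
    rw [Multiset.map_map, sum_map_val]
    rfl
  rw [nuclearNorm, hsum, hroots, ← hsum]
  simp [Real.sqrt_sq_eq_abs]

theorem Matrix.PosSemidef.nuclearNorm_eq_trace {n : ℕ} {A : Matrix (Fin n) (Fin n) ℝ}
    (hA : A.PosSemidef) : nuclearNorm A = A.trace := by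
  rw [nuclearNorm_eq_sum_abs_eigenvalues hA.1, hA.1.trace_eq_sum_eigenvalues]
  simp [abs_of_nonneg (hA.eigenvalues_nonneg _)]

end Spectrum

theorem sortedDesc_eq_comp {m : ℕ} (f : Fin m → ℝ) :
    sortedDesc f = f ∘ Tuple.sort (fun j => -f j) := by
  funext i
  simp [sortedDesc]

theorem map_univ_val_sortedDesc {m : ℕ} (f : Fin m → ℝ) :
    univ.val.map (sortedDesc f) = univ.val.map f := by
  rw [sortedDesc_eq_comp, ← Multiset.map_map, Multiset.map_univ_val_equiv]

theorem esum_eq_sum_prod_sortedDesc {n : ℕ} {A : Matrix (Fin n) (Fin n) ℝ} (hA : A.IsHermitian)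
    (k : ℕ) : Esum A k = ∑ K ∈ powersetCard k univ, ∏ i ∈ K, sortedDesc hA.eigenvalues i := by
  rw [esum_eq_esymm_eigenvalues hA, ← map_univ_val_sortedDesc, esymm_map_val]

theorem Matrix.PosSemidef.sortedDesc_eigenvalues_nonneg {n : ℕ}
    {A : Matrix (Fin n) (Fin n) ℝ} (hA : A.PosSemidef) (i : Fin n) :
    0 ≤ sortedDesc hA.1.eigenvalues i := by
  rw [sortedDesc_eq_comp]
  exact hA.eigenvalues_nonneg _

theorem Finset.sum_powersetCard_sum_compl_insert {α M : Type*} [Fintype α] [DecidableEq α]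
    [AddCommMonoid M] (f : Finset α → M) (r : ℕ) :
    ∑ J ∈ powersetCard r univ, ∑ i ∈ Jᶜ, f (insert i J) =
      (r + 1) • ∑ K ∈ powersetCard (r + 1) univ, f K := by
  calc _ = ∑ K ∈ powersetCard (r + 1) univ, ∑ _i ∈ K, f K := by
        rw [sum_sigma', sum_sigma']
        refine sum_nbij' (fun p => ⟨insert p.2 p.1, p.2⟩) (fun p => ⟨p.1.erase p.2, p.2⟩)
          ?_ ?_ ?_ ?_ ?_ <;> rintro ⟨J, i⟩ h <;>
          simp only [mem_sigma, mem_powersetCard_univ, mem_compl] at h <;>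
          simp_all [card_insert_of_notMem, card_erase_of_mem]
    _ = _ := by
        rw [smul_sum]
        exact sum_congr rfl fun K hK => by rw [sum_const, mem_powersetCard_univ.mp hK]

theorem Finset.exists_ne_zero_le_mul_of_sum_le {ι R : Type*} [Semiring R] [LinearOrder R]
    [IsStrictOrderedRing R] {s : Finset ι} {f w : ι → R} {c : R} (hf : ∀ i ∈ s, 0 ≤ f i)
    (hw : ∑ i ∈ s, w i ≠ 0) (h : ∑ i ∈ s, f i ≤ c * ∑ i ∈ s, w i) :
    ∃ i ∈ s, w i ≠ 0 ∧ f i ≤ c * w i := by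
  have hsupp : ∑ i ∈ s with w i ≠ 0, w i = ∑ i ∈ s, w i := sum_filter_ne_zero s
  obtain ⟨i, hi, hle⟩ := exists_le_of_sum_le (nonempty_of_sum_ne_zero (hsupp ▸ hw)) <|
    calc ∑ i ∈ s with w i ≠ 0, f i ≤ ∑ i ∈ s, f i :=
          sum_le_sum_of_subset_of_nonneg (filter_subset _ _) fun i hi _ => hf i hi
      _ ≤ c * ∑ i ∈ s, w i := h
      _ = ∑ i ∈ s with w i ≠ 0, c * w i := by rw [← mul_sum, hsupp]
  exact ⟨i, mem_of_mem_filter i hi, (mem_filter.mp hi).2, hle⟩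

theorem Fin.sum_prod_powersetCard_succ_le {R : Type*} [CommSemiring R] [PartialOrder R]
    [IsOrderedRing R] {n : ℕ} (r : ℕ) {μ : Fin n → R} (hμ : ∀ i, 0 ≤ μ i) :
    ∑ K ∈ powersetCard (r + 1) univ, ∏ i ∈ K, μ i ≤
      (∑ s ∈ univ.filter (fun s : Fin n => r ≤ (s : ℕ)), μ s) *
        ∑ J ∈ powersetCard r univ, ∏ i ∈ J, μ i := by
  set P := powersetCard (r + 1) (univ : Finset (Fin n))
  have hne (K : P) : K.1.Nonempty :=
    card_pos.mp (by rw [mem_powersetCard_univ.mp K.2]; omega)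
  -- A set `K` of size `r + 1` is its largest element `s` inserted into an `r`-set, and `r ≤ s`.
  let split (K : P) : Fin n × Finset (Fin n) :=
    (K.1.max' (hne K), K.1.erase (K.1.max' (hne K)))
  have hsplit_inj : Function.Injective split := fun K L h => by
    rw [Subtype.ext_iff, ← insert_erase (max'_mem K.1 (hne K)),
      ← insert_erase (max'_mem L.1 (hne L))]
    exact congrArg₂ insert (congrArg Prod.fst h) (congrArg Prod.snd h)
  have hsplit_mem (K : P) :
      split K ∈ univ.filter (fun s : Fin n => r ≤ (s : ℕ)) ×ˢ powersetCard r univ := by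
    have hK := mem_powersetCard_univ.mp K.2
    have hle : #K.1 ≤ #(Iic (K.1.max' (hne K))) :=
      card_le_card fun x hx => mem_Iic.mpr (le_max' _ x hx)
    rw [Fin.card_Iic, hK] at hle
    simp only [split, mem_product, mem_filter, mem_univ, true_and, mem_powersetCard_univ,
      card_erase_of_mem (max'_mem _ _), hK]
    omega
  rw [sum_mul_sum, ← sum_product', ← sum_attach P]
  calc ∑ K ∈ P.attach, ∏ i ∈ K.1, μ i
      = ∑ K ∈ P.attach, μ (split K).1 * ∏ i ∈ (split K).2, μ i :=
        sum_congr rfl fun K _ => (mul_prod_erase _ _ (max'_mem _ _)).symm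
    _ = ∑ p ∈ P.attach.image split, μ p.1 * ∏ i ∈ p.2, μ i :=
        (sum_image (f := fun p => μ p.1 * ∏ i ∈ p.2, μ i) fun K _ L _ h => hsplit_inj h).symm
    _ ≤ _ := sum_le_sum_of_subset_of_nonneg (image_subset_iff.mpr fun K _ => hsplit_mem K)
        fun p _ _ => mul_nonneg (hμ _) (prod_nonneg fun i _ => hμ i)

section PosSemidef

variable {n : ℕ} {A : Matrix (Fin n) (Fin n) ℝ}

theorem Matrix.PosSemidef.esum_succ_le (hA : A.PosSemidef) (r : ℕ) :
    Esum A (r + 1) ≤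
      (∑ s ∈ univ.filter (fun s : Fin n => r ≤ (s : ℕ)), sortedDesc hA.1.eigenvalues s) *
        Esum A r := by
  rw [esum_eq_sum_prod_sortedDesc hA.1, esum_eq_sum_prod_sortedDesc hA.1]
  exact Fin.sum_prod_powersetCard_succ_le r hA.sortedDesc_eigenvalues_nonneg

theorem Matrix.PosSemidef.esum_pos {r : ℕ} (hA : A.PosSemidef) (hr : r ≤ A.rank) :
    0 < Esum A r := by
  rw [esum_eq_esymm_eigenvalues hA.1, esymm_map_val]
  rw [hA.1.rank_eq_card_non_zero_eigs, Fintype.card_subtype] at hr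
  obtain ⟨K, hK, hKcard⟩ := exists_subset_card_eq hr
  refine sum_pos' (fun _ _ => prod_nonneg fun i _ => hA.eigenvalues_nonneg i)
    ⟨K, mem_powersetCard_univ.mpr hKcard, prod_pos fun i hi => ?_⟩
  exact (hA.eigenvalues_nonneg i).lt_of_ne' (mem_filter.mp (hK hi)).2

theorem Matrix.PosSemidef.pminor_nonneg (hA : A.PosSemidef) (J : Finset (Fin n)) :
    0 ≤ pminor A J :=
  (hA.submatrix _).det_nonneg

end PosSemidef

section CrossApprox

variable {n : ℕ} {A : Matrix (Fin n) (Fin n) ℝ} {J : Finset (Fin n)}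

theorem crossApprox_apply_of_mem (hJ : pminor A J ≠ 0) {i : Fin n} (hi : i ∈ J) (j : Fin n) :
    crossApprox A J i j = A i j := by
  let AJ : Matrix J J ℝ := A.submatrix Subtype.val Subtype.val
  have hrow : crossApprox A J i j =
      (AJ * AJ⁻¹ * (A.submatrix Subtype.val id : Matrix J (Fin n) ℝ)) ⟨i, hi⟩ j := rfl
  rw [hrow, mul_nonsing_inv _ (isUnit_iff_ne_zero.mpr hJ), Matrix.one_mul]
  rfl

-- `A - A_J` is the Schur complement of `A(J,J)` in the principal submatrix of `A` on `J ⊕ Fin n`.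
theorem Matrix.PosSemidef.sub_crossApprox (hA : A.PosSemidef) (hJ : pminor A J ≠ 0) :
    (A - crossApprox A J).PosSemidef := by
  let AJ : Matrix J J ℝ := A.submatrix Subtype.val Subtype.val
  have hAJ : AJ.PosDef := (hA.submatrix _).posDef_iff_det_ne_zero.mpr hJ
  let : Invertible AJ := AJ.invertibleOfIsUnitDet (isUnit_iff_ne_zero.mpr hJ)
  have hblocks : A.submatrix (Sum.elim Subtype.val id) (Sum.elim Subtype.val id) =
      fromBlocks AJ (A.submatrix Subtype.val id) (A.submatrix Subtype.val id)ᴴ A := by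
    rw [conjTranspose_submatrix, hA.1]
    ext (i | i) (j | j) <;> rfl
  have := hA.submatrix (Sum.elim (Subtype.val : J → Fin n) id)
  rwa [hblocks, PosDef.fromBlocks₁₁ _ _ hAJ, conjTranspose_submatrix, hA.1] at this

theorem pminor_insert (hJ : pminor A J ≠ 0) {i : Fin n} (hi : i ∉ J) :
    pminor A (insert i J) = pminor A J * (A - crossApprox A J) i i := by
  let AJ : Matrix J J ℝ := A.submatrix Subtype.val Subtype.val
  let : Invertible AJ := AJ.invertibleOfIsUnitDet (isUnit_iff_ne_zero.mpr hJ)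
  let e := (subtypeInsertEquivOption hi).trans (Equiv.optionEquivSumPUnit.{0} J)
  have hblocks :
      (A.submatrix (Subtype.val : ↥(insert i J) → Fin n) Subtype.val).submatrix e.symm e.symm =
        fromBlocks AJ (A.submatrix Subtype.val fun _ => i) (A.submatrix (fun _ => i) Subtype.val)
          (A.submatrix (fun _ : Unit => i) fun _ => i) := by
    ext (j | j) (k | k) <;> rfl
  rw [pminor, ← det_submatrix_equiv_self e.symm, hblocks, det_fromBlocks₁₁]
  congr 1
  rw [det_unique]
  rfl

theorem pminor_mul_trace_sub_crossApprox (hJ : pminor A J ≠ 0) :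
    pminor A J * (A - crossApprox A J).trace = ∑ i ∈ Jᶜ, pminor A (insert i J) := by
  have hdiag : ∀ i ∈ J, (A - crossApprox A J).diag i = 0 := fun i hi => by
    rw [diag_apply, Matrix.sub_apply, crossApprox_apply_of_mem hJ hi, sub_self]
  rw [trace, ← sum_add_sum_compl J, sum_eq_zero hdiag, zero_add, mul_sum]
  exact sum_congr rfl fun i hi => (pminor_insert hJ (mem_compl.mp hi)).symm

theorem Matrix.PosSemidef.exists_trace_sub_crossApprox_le {r : ℕ} (hA : A.PosSemidef)
    (hr : 0 < Esum A r) :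
    ∃ J : Finset (Fin n), J.card = r ∧ pminor A J ≠ 0 ∧
      (A - crossApprox A J).trace ≤ (r + 1) * Esum A (r + 1) / Esum A r := by
  have hsum : ∑ J ∈ powersetCard r univ, ∑ i ∈ Jᶜ, pminor A (insert i J) =
      (r + 1) * Esum A (r + 1) / Esum A r * Esum A r := by
    rw [sum_powersetCard_sum_compl_insert, div_mul_cancel₀ _ hr.ne', nsmul_eq_mul]
    push_cast
    rfl
  obtain ⟨J, hJr, hJ, hle⟩ := exists_ne_zero_le_mul_of_sum_le (w := pminor A)
    (fun J _ => sum_nonneg fun i _ => hA.pminor_nonneg _) hr.ne' hsum.le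
  refine ⟨J, mem_powersetCard_univ.mp hJr, hJ, ?_⟩
  rw [← pminor_mul_trace_sub_crossApprox hJ, mul_comm _ (pminor A J)] at hle
  exact le_of_mul_le_mul_left hle ((hA.pminor_nonneg J).lt_of_ne' hJ)

end CrossApprox

theorem exists_quasi_optimal_cross_nuclear_general {n r : ℕ}
    (A : Matrix (Fin n) (Fin n) ℝ) (hA : A.PosSemidef)
    (hrk : r ≤ A.rank) :
    ∃ J : Finset (Fin n), J.card = r ∧ pminor A J ≠ 0 ∧
      nuclearNorm (A - crossApprox A J) ≤
        (r + 1 : ℝ) * ∑ s ∈ Finset.univ.filter (fun s : Fin n => r ≤ (s : ℕ)),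
          sortedDesc hA.1.eigenvalues s := by
  have hEr := hA.esum_pos hrk
  obtain ⟨J, hJr, hJ, htrace⟩ := hA.exists_trace_sub_crossApprox_le hEr
  refine ⟨J, hJr, hJ, ?_⟩
  calc nuclearNorm (A - crossApprox A J) = (A - crossApprox A J).trace :=
        (hA.sub_crossApprox hJ).nuclearNorm_eq_trace
    _ ≤ (r + 1) * (Esum A (r + 1) / Esum A r) := by rwa [← mul_div_assoc]
    _ ≤ _ := by
        gcongr
        exact div_le_of_le_mul₀ hEr.le
          (sum_nonneg fun s _ => hA.sortedDesc_eigenvalues_nonneg s) (hA.esum_succ_le r)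

/-- For `A` SPSD of rank `k` and `1 ≤ r ≤ k`, there is an index set `J*` of
cardinality `r` with `A(J*,J*)` invertible and
`‖A - A_{J*}‖_* ≤ (r+1) ∑_{s=r+1}^{n} σ_s(A)` (0-based: indices `s ≥ r`). -/
theorem exists_quasi_optimal_cross_nuclear {n r : ℕ}
    (A : Matrix (Fin n) (Fin n) ℝ) (hA : A.PosSemidef)
    (hr : 1 ≤ r) (hrk : r ≤ A.rank) :
    ∃ J : Finset (Fin n), J.card = r ∧ pminor A J ≠ 0 ∧
      nuclearNorm (A - crossApprox A J) ≤
        (r + 1 : ℝ) * ∑ s ∈ Finset.univ.filter (fun s : Fin n => r ≤ (s : ℕ)),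
          sortedDesc hA.1.eigenvalues s :=
  exists_quasi_optimal_cross_nuclear_general A hA hrk
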